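/- arXiv:0712.3112 — 3 statements merged into one kernel-verified Lean document; each statement's English description precedes it below -/
import Mathlib

section
/- Let G = (V, E) be a finite multigraph without loops, n = |V|, and for each i ≥ 0 let a_i be the number of i-matchings of G, i.e. i-element sets of edges no two of which share an endpoint. Then the bivariate matching polynomial is a substitution instance of the edge elimination polynomial: Σ_{i ≥ 0} a_i x^{n − 2i} y^i = ξ(G, x, 0, y), where the right-hand side is ξ(G, x, y, z) with the second variable replaced by 0 and the third variable renamed y. In particular, the matching generating polynomial is g(G, x) = ξ(G, 1, 0, x) and the matching defect polynomial is μ(G, x) = ξ(G, x, 0, −1). -/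
/-- A finite multigraph: finite vertex and edge types, each edge assigned an
unordered pair of (not necessarily distinct) endpoints. -/
structure Multigraph where
  V : Type
  E : Type
  [fintypeV : Fintype V]
  [decEqV : DecidableEq V]
  [fintypeE : Fintype E]
  [decEqE : DecidableEq E]
  ends : E → Sym2 V

namespace Multigraph

attribute [instance] fintypeV decEqV fintypeE decEqE

/-- The empty multigraph. -/
def emptyGraph : Multigraph where
  V := Empty
  E := Empty
  ends := fun e => e.elim

/-- The one-vertex multigraph `E₁` with no edges. -/
def singleVertex : Multigraph where
  V := Unit
  E := Empty
  ends := fun e => e.elim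

/-- Disjoint union of multigraphs. -/
def disjUnion (G₁ G₂ : Multigraph) : Multigraph where
  V := G₁.V ⊕ G₂.V
  E := G₁.E ⊕ G₂.E
  ends := Sum.elim (fun e => (G₁.ends e).map Sum.inl) (fun e => (G₂.ends e).map Sum.inr)

/-- Deletion of an edge. -/
def deleteEdge (G : Multigraph) (e : G.E) : Multigraph where
  V := G.V
  E := {e' : G.E // e' ≠ e}
  ends := fun e' => G.ends e'.val

/-- Contraction of an edge: its endpoints are identified
(replaced by a single new vertex) and the edge is removed. -/
def contractEdge (G : Multigraph) (e : G.E) : Multigraph where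
  V := {v : G.V // v ∉ G.ends e} ⊕ Unit
  E := {e' : G.E // e' ≠ e}
  ends := fun e' => (G.ends e'.val).map
    (fun v => if h : v ∈ G.ends e then Sum.inr () else Sum.inl ⟨v, h⟩)

/-- Extraction of an edge: both endpoints are deleted together with
all incident edges. -/
def extractEdge (G : Multigraph) (e : G.E) : Multigraph where
  V := {v : G.V // v ∉ G.ends e}
  E := {e' : G.E // ∀ v : G.V, v ∈ G.ends e' → v ∉ G.ends e}
  ends := fun e' => (G.ends e'.val).attachWith (fun v hv => e'.prop v hv)

/-- Deletion of a vertex (together with all incident edges). -/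
def deleteVertex (G : Multigraph) (v : G.V) : Multigraph where
  V := {w : G.V // w ≠ v}
  E := {e : G.E // v ∉ G.ends e}
  ends := fun e => (G.ends e.val).attachWith
    (fun w hw => fun hwv => e.prop (hwv ▸ hw))

/-- Number of connected components of the spanning subgraph `(V, S)`. -/
noncomputable def k (G : Multigraph) (S : Finset G.E) : ℕ :=
  Nat.card (Quot (fun u v : G.V => ∃ e ∈ S, G.ends e = s(u, v)))

/-- Number of connected components of `(V(S), S)`, the graph on the vertices
covered by `S`. -/
noncomputable def kcov (G : Multigraph) (S : Finset G.E) : ℕ :=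
  Nat.card (Quot (fun u v : {w : G.V // ∃ e ∈ S, w ∈ G.ends e} =>
    ∃ e ∈ S, G.ends e = s(u.val, v.val)))

/-- `V(A)` and `V(B)` are disjoint. -/
def CovDisjoint (G : Multigraph) (A B : Finset G.E) : Prop :=
  ∀ v : G.V, (∃ e ∈ A, v ∈ G.ends e) → ¬ (∃ e ∈ B, v ∈ G.ends e)

instance (G : Multigraph) (A B : Finset G.E) : Decidable (G.CovDisjoint A B) := by
  unfold CovDisjoint; infer_instance

/-- The edge elimination polynomial (evaluated at `x y z` in a commutative ring):
`ξ(G,x,y,z) = Σ_{(A ⊔ B) ⊆ E} x^{k(A∪B)-k_cov(B)} y^{|A|+|B|-k_cov(B)} z^{k_cov(B)}`. -/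
noncomputable def xi {R : Type*} [CommRing R] (G : Multigraph) (x y z : R) : R :=
  ∑ A : Finset G.E, ∑ B : Finset G.E,
    if G.CovDisjoint A B then
      x ^ (G.k (A ∪ B) - G.kcov B) * y ^ (A.card + B.card - G.kcov B) * z ^ G.kcov B
    else 0

/-- Isomorphism of multigraphs. -/
structure Iso (G H : Multigraph) where
  vEquiv : G.V ≃ H.V
  eEquiv : G.E ≃ H.E
  ends_map : ∀ e : G.E, H.ends (eEquiv e) = (G.ends e).map vEquiv

end Multigraph

/-- A matching: a set of edges no two of which share an endpoint. -/
def Multigraph.IsMatching (G : Multigraph) (M : Finset G.E) : Prop :=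
  ∀ e₁ ∈ M, ∀ e₂ ∈ M, e₁ ≠ e₂ → ∀ v : G.V, v ∈ G.ends e₁ → v ∉ G.ends e₂

/-- The number of `i`-matchings of `G`. -/
noncomputable def Multigraph.matchCount (G : Multigraph) (i : ℕ) : ℕ :=
  Nat.card {M : Finset G.E // G.IsMatching M ∧ M.card = i}

namespace Multigraph

variable {G : Multigraph}

instance (M : Finset G.E) : Decidable (G.IsMatching M) := by
  unfold IsMatching; infer_instance

/-- The relation on vertices generating components of `(V, S)`. -/
def vrel (G : Multigraph) (S : Finset G.E) (u v : G.V) : Prop :=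
  ∃ e ∈ S, G.ends e = s(u, v)

/-- The relation on covered vertices generating components of `(V(S), S)`. -/
def covrel (G : Multigraph) (S : Finset G.E)
    (u v : {w : G.V // ∃ e ∈ S, w ∈ G.ends e}) : Prop :=
  ∃ e ∈ S, G.ends e = s(u.val, v.val)

lemma k_def (S : Finset G.E) : G.k S = Nat.card (Quot (G.vrel S)) := rfl

lemma kcov_def (S : Finset G.E) : G.kcov S = Nat.card (Quot (G.covrel S)) := rfl

lemma quot_mk_eq (S : Finset G.E) {e : G.E} (he : e ∈ S) {u v : G.V}
    (hu : u ∈ G.ends e) (hv : v ∈ G.ends e) :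
    Quot.mk (G.vrel S) u = Quot.mk (G.vrel S) v := by
  rcases eq_or_ne u v with rfl | hne
  · rfl
  · exact Quot.sound ⟨e, he, (Sym2.mem_and_mem_iff hne).mp ⟨hu, hv⟩⟩

lemma quot_mk_eq_cov (S : Finset G.E) {e : G.E} (he : e ∈ S)
    {u v : {w : G.V // ∃ e ∈ S, w ∈ G.ends e}}
    (hu : u.val ∈ G.ends e) (hv : v.val ∈ G.ends e) :
    Quot.mk (G.covrel S) u = Quot.mk (G.covrel S) v := by
  rcases eq_or_ne u v with rfl | hne
  · rfl
  · have hne' : u.val ≠ v.val := fun h => hne (Subtype.ext h)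
    exact Quot.sound ⟨e, he, (Sym2.mem_and_mem_iff hne').mp ⟨hu, hv⟩⟩

lemma IsMatching.edge_unique {M : Finset G.E} (hM : G.IsMatching M)
    {e₁ e₂ : G.E} (h₁ : e₁ ∈ M) (h₂ : e₂ ∈ M) {v : G.V}
    (hv₁ : v ∈ G.ends e₁) (hv₂ : v ∈ G.ends e₂) : e₁ = e₂ := by
  by_contra h
  exact hM e₁ h₁ e₂ h₂ h v hv₁ hv₂

lemma choose_eq {M : Finset G.E} (hM : G.IsMatching M) {v : G.V}
    (h : ∃ e ∈ M, v ∈ G.ends e) {e : G.E} (he : e ∈ M) (hv : v ∈ G.ends e) :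
    h.choose = e :=
  hM.edge_unique h.choose_spec.1 he h.choose_spec.2 hv

/-- The canonical map from edges of `S` to covered components. -/
noncomputable def edgeToCovQuot (S : Finset G.E) (e : {e // e ∈ S}) :
    Quot (G.covrel S) :=
  Quot.mk (G.covrel S)
    ⟨(G.ends e.val).out.1, ⟨e.val, e.2, Sym2.out_fst_mem _⟩⟩

lemma edgeToCovQuot_surjective (S : Finset G.E) :
    Function.Surjective (G.edgeToCovQuot S) := by
  intro q
  induction q using Quot.ind with
  | _ w =>
    obtain ⟨e, he, hve⟩ := w.2
    exact ⟨⟨e, he⟩, quot_mk_eq_cov S he (Sym2.out_fst_mem _) hve⟩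

lemma kcov_le_card (S : Finset G.E) : G.kcov S ≤ S.card := by
  rw [kcov_def]
  calc Nat.card (Quot (G.covrel S))
      ≤ Nat.card {e // e ∈ S} :=
        Nat.card_le_card_of_surjective _ (G.edgeToCovQuot_surjective S)
    _ = S.card := by rw [Nat.card_eq_fintype_card, Fintype.card_coe]

lemma kcov_lt_card {S : Finset G.E} (h : ¬ G.IsMatching S) :
    G.kcov S < S.card := by
  unfold IsMatching at h
  push_neg at h
  obtain ⟨e₁, h₁, e₂, h₂, hne, v, hv₁, hv₂⟩ := h
  have hninj : ¬ Function.Injective (G.edgeToCovQuot S) := by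
    intro hinj
    have hcov : ∃ e ∈ S, v ∈ G.ends e := ⟨e₁, h₁, hv₁⟩
    have h12 : G.edgeToCovQuot S ⟨e₁, h₁⟩ = G.edgeToCovQuot S ⟨e₂, h₂⟩ := by
      unfold edgeToCovQuot
      calc Quot.mk (G.covrel S) ⟨(G.ends e₁).out.1, _⟩
          = Quot.mk (G.covrel S) ⟨v, hcov⟩ :=
            quot_mk_eq_cov S h₁ (Sym2.out_fst_mem _) hv₁
        _ = Quot.mk (G.covrel S) ⟨(G.ends e₂).out.1, _⟩ :=
            quot_mk_eq_cov S h₂ hv₂ (Sym2.out_fst_mem _)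
    exact hne (congrArg Subtype.val (hinj h12))
  haveI : Fintype (Quot (G.covrel S)) := Fintype.ofFinite _
  rw [kcov_def, Nat.card_eq_fintype_card]
  calc Fintype.card (Quot (G.covrel S))
      < Fintype.card {e // e ∈ S} :=
        Fintype.card_lt_of_surjective_not_injective _
          (G.edgeToCovQuot_surjective S) hninj
    _ = S.card := Fintype.card_coe S

lemma edgeToCovQuot_injective {M : Finset G.E} (hM : G.IsMatching M) :
    Function.Injective (G.edgeToCovQuot M) := by
  have hlift : ∀ a b : {w : G.V // ∃ e ∈ M, w ∈ G.ends e}, G.covrel M a b →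
      (⟨a.2.choose, a.2.choose_spec.1⟩ : {e // e ∈ M})
        = ⟨b.2.choose, b.2.choose_spec.1⟩ := by
    rintro a b ⟨e, he, hends⟩
    have ha : a.val ∈ G.ends e := by rw [hends]; exact Sym2.mem_mk_left _ _
    have hb : b.val ∈ G.ends e := by rw [hends]; exact Sym2.mem_mk_right _ _
    exact Subtype.ext ((choose_eq hM a.2 he ha).trans (choose_eq hM b.2 he hb).symm)
  have : Function.LeftInverse
      (Quot.lift (fun w : {w : G.V // ∃ e ∈ M, w ∈ G.ends e} =>
        (⟨w.2.choose, w.2.choose_spec.1⟩ : {e // e ∈ M})) hlift)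
      (G.edgeToCovQuot M) := by
    intro e
    exact Subtype.ext (choose_eq hM _ e.2 (Sym2.out_fst_mem _))
  exact this.injective

lemma kcov_matching {M : Finset G.E} (hM : G.IsMatching M) :
    G.kcov M = M.card := by
  rw [kcov_def,
    ← Nat.card_eq_of_bijective _ ⟨edgeToCovQuot_injective hM,
      G.edgeToCovQuot_surjective M⟩, Nat.card_eq_fintype_card, Fintype.card_coe]

/-- The canonical map from uncovered vertices plus edges to components. -/
noncomputable def sumToQuot (S : Finset G.E)
    (a : {v : G.V // ¬ ∃ e ∈ S, v ∈ G.ends e} ⊕ {e // e ∈ S}) :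
    Quot (G.vrel S) :=
  Sum.elim (fun v => Quot.mk (G.vrel S) v.val)
    (fun e => Quot.mk (G.vrel S) (G.ends e.val).out.1) a

lemma sumToQuot_surjective (S : Finset G.E) :
    Function.Surjective (G.sumToQuot S) := by
  intro q
  induction q using Quot.ind with
  | _ w =>
    by_cases h : ∃ e ∈ S, w ∈ G.ends e
    · obtain ⟨e, he, hwe⟩ := h
      exact ⟨.inr ⟨e, he⟩, quot_mk_eq S he (Sym2.out_fst_mem _) hwe⟩
    · exact ⟨.inl ⟨w, h⟩, rfl⟩

lemma sumToQuot_injective {M : Finset G.E} (hM : G.IsMatching M) :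
    Function.Injective (G.sumToQuot M) := by
  classical
  have hlift : ∀ a b : G.V, G.vrel M a b →
      (if h : ∃ e ∈ M, a ∈ G.ends e then
        (Sum.inr ⟨h.choose, h.choose_spec.1⟩ :
          {v : G.V // ¬ ∃ e ∈ M, v ∈ G.ends e} ⊕ {e // e ∈ M})
       else .inl ⟨a, h⟩)
      = (if h : ∃ e ∈ M, b ∈ G.ends e then
          (Sum.inr ⟨h.choose, h.choose_spec.1⟩ :
            {v : G.V // ¬ ∃ e ∈ M, v ∈ G.ends e} ⊕ {e // e ∈ M})
         else .inl ⟨b, h⟩) := by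
    rintro a b ⟨e, he, hends⟩
    have ha : a ∈ G.ends e := by rw [hends]; exact Sym2.mem_mk_left _ _
    have hb : b ∈ G.ends e := by rw [hends]; exact Sym2.mem_mk_right _ _
    have ca : ∃ e ∈ M, a ∈ G.ends e := ⟨e, he, ha⟩
    have cb : ∃ e ∈ M, b ∈ G.ends e := ⟨e, he, hb⟩
    rw [dif_pos ca, dif_pos cb]
    exact congrArg _ (Subtype.ext
      ((choose_eq hM ca he ha).trans (choose_eq hM cb he hb).symm))
  have : Function.LeftInverse
      (Quot.lift (fun w : G.V =>
        if h : ∃ e ∈ M, w ∈ G.ends e then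
          (Sum.inr ⟨h.choose, h.choose_spec.1⟩ :
            {v : G.V // ¬ ∃ e ∈ M, v ∈ G.ends e} ⊕ {e // e ∈ M})
        else .inl ⟨w, h⟩) hlift)
      (G.sumToQuot M) := by
    rintro (⟨v, hv⟩ | ⟨e, he⟩)
    · show (if h : ∃ e ∈ M, v ∈ G.ends e then
          (Sum.inr ⟨h.choose, h.choose_spec.1⟩ :
            {v : G.V // ¬ ∃ e ∈ M, v ∈ G.ends e} ⊕ {e // e ∈ M})
        else .inl ⟨v, h⟩) = Sum.inl ⟨v, hv⟩
      rw [dif_neg hv]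
    · have hcov : ∃ e' ∈ M, (G.ends e).out.1 ∈ G.ends e' :=
        ⟨e, he, Sym2.out_fst_mem _⟩
      show (if h : ∃ e' ∈ M, (G.ends e).out.1 ∈ G.ends e' then
          (Sum.inr ⟨h.choose, h.choose_spec.1⟩ :
            {v : G.V // ¬ ∃ e ∈ M, v ∈ G.ends e} ⊕ {e // e ∈ M})
        else .inl ⟨_, h⟩) = Sum.inr ⟨e, he⟩
      rw [dif_pos hcov]
      exact congrArg _ (Subtype.ext (choose_eq hM hcov he (Sym2.out_fst_mem _)))
  exact this.injective

lemma k_matching {M : Finset G.E} (hM : G.IsMatching M) :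
    G.k M = Fintype.card {v : G.V // ¬ ∃ e ∈ M, v ∈ G.ends e} + M.card := by
  rw [k_def,
    ← Nat.card_eq_of_bijective _ ⟨sumToQuot_injective hM, G.sumToQuot_surjective M⟩,
    Nat.card_eq_fintype_card, Fintype.card_sum, Fintype.card_coe]

lemma card_ends (hG : ∀ e : G.E, ¬ (G.ends e).IsDiag) (e : G.E) :
    Fintype.card {v : G.V // v ∈ G.ends e} = 2 := by
  have hab : s((G.ends e).out.1, (G.ends e).out.2) = G.ends e := (G.ends e).out_eq
  have hne : (G.ends e).out.1 ≠ (G.ends e).out.2 := by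
    intro h
    apply hG e
    rw [← hab, Sym2.mk_isDiag_iff]
    exact h
  have hmem : ∀ v : G.V, v ∈ G.ends e ↔ v = (G.ends e).out.1 ∨ v = (G.ends e).out.2 :=
    fun v => by conv_lhs => rw [← hab, Sym2.mem_iff]
  rw [Fintype.card_subtype]
  rw [show Finset.univ.filter (fun v => v ∈ G.ends e)
      = {(G.ends e).out.1, (G.ends e).out.2} from by
    ext v
    simp only [Finset.mem_filter, Finset.mem_univ, true_and, Finset.mem_insert,
      Finset.mem_singleton, hmem]]
  exact Finset.card_pair hne

lemma card_cov (hG : ∀ e : G.E, ¬ (G.ends e).IsDiag) {M : Finset G.E}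
    (hM : G.IsMatching M) :
    Fintype.card {v : G.V // ∃ e ∈ M, v ∈ G.ends e} = 2 * M.card := by
  classical
  have hbij : Function.Bijective
      (fun x : Σ e : {e // e ∈ M}, {v : G.V // v ∈ G.ends e.val} =>
        (⟨x.2.val, ⟨x.1.val, x.1.2, x.2.2⟩⟩ :
          {v : G.V // ∃ e ∈ M, v ∈ G.ends e})) := by
    constructor
    · rintro ⟨⟨e₁, he₁⟩, v₁, hv₁⟩ ⟨⟨e₂, he₂⟩, v₂, hv₂⟩ h
      simp only [Subtype.mk.injEq] at h
      subst h
      have : e₁ = e₂ := hM.edge_unique he₁ he₂ hv₁ hv₂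
      subst this
      rfl
    · rintro ⟨v, h⟩
      exact ⟨⟨⟨h.choose, h.choose_spec.1⟩, v, h.choose_spec.2⟩, rfl⟩
  rw [← Fintype.card_of_bijective hbij, Fintype.card_sigma]
  simp only [card_ends hG]
  rw [Finset.sum_const, Finset.card_univ, Fintype.card_coe, smul_eq_mul, mul_comm]

lemma card_uncov (hG : ∀ e : G.E, ¬ (G.ends e).IsDiag) {M : Finset G.E}
    (hM : G.IsMatching M) :
    Fintype.card {v : G.V // ¬ ∃ e ∈ M, v ∈ G.ends e}
      = Fintype.card G.V - 2 * M.card := by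
  classical
  rw [Fintype.card_subtype_compl, card_cov hG hM]

lemma two_mul_card_le (hG : ∀ e : G.E, ¬ (G.ends e).IsDiag) {M : Finset G.E}
    (hM : G.IsMatching M) : 2 * M.card ≤ Fintype.card G.V := by
  rw [← card_cov hG hM]
  classical
  exact Fintype.card_subtype_le _

lemma xi_y_zero {R : Type*} [CommRing R] (G : Multigraph)
    (hG : ∀ e : G.E, ¬ (G.ends e).IsDiag) (x z : R) :
    G.xi x 0 z = ∑ M : Finset G.E, if G.IsMatching M then
      x ^ (Fintype.card G.V - 2 * M.card) * z ^ M.card else 0 := by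
  unfold xi
  rw [Finset.sum_comm]
  refine Finset.sum_congr rfl fun B _ => ?_
  by_cases hB : G.IsMatching B
  · rw [if_pos hB, Finset.sum_eq_single ∅]
    · have hdisj : G.CovDisjoint ∅ B := by
        intro v h
        obtain ⟨e, he, -⟩ := h
        exact absurd he (Finset.notMem_empty e)
      rw [if_pos hdisj, Finset.empty_union, Finset.card_empty, zero_add,
        kcov_matching hB, Nat.sub_self, pow_zero, mul_one, k_matching hB,
        Nat.add_sub_cancel, card_uncov hG hB]
    · intro A _ hA
      have h1 : A.card ≠ 0 := fun h => hA (Finset.card_eq_zero.mp h)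
      have h0 : (0 : R) ^ (A.card + B.card - G.kcov B) = 0 := by
        apply zero_pow
        rw [kcov_matching hB, Nat.add_sub_cancel]
        exact h1
      rw [h0]
      simp only [mul_zero, zero_mul, ite_self]
    · intro h
      exact absurd (Finset.mem_univ ∅) h
  · rw [if_neg hB]
    refine Finset.sum_eq_zero fun A _ => ?_
    have hlt := kcov_lt_card hB
    have h0 : (0 : R) ^ (A.card + B.card - G.kcov B) = 0 := by
      apply zero_pow
      omega
    rw [h0]
    simp only [mul_zero, zero_mul, ite_self]

lemma sum_matching {R : Type*} [CommRing R] (G : Multigraph)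
    (hG : ∀ e : G.E, ¬ (G.ends e).IsDiag) (t : ℕ → R) :
    (∑ M : Finset G.E, if G.IsMatching M then t M.card else 0)
      = ∑ i ∈ Finset.range (Fintype.card G.V + 1), (G.matchCount i : R) * t i := by
  classical
  rw [← Finset.sum_filter]
  have hmaps : ∀ M ∈ Finset.univ.filter (fun M : Finset G.E => G.IsMatching M),
      M.card ∈ Finset.range (Fintype.card G.V + 1) := by
    intro M hM
    rw [Finset.mem_filter] at hM
    have := two_mul_card_le hG hM.2
    rw [Finset.mem_range]
    omega
  rw [← Finset.sum_fiberwise_of_maps_to hmaps]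
  refine Finset.sum_congr rfl fun i _ => ?_
  rw [Finset.filter_filter]
  have hcount : G.matchCount i
      = (Finset.univ.filter
          (fun M : Finset G.E => G.IsMatching M ∧ M.card = i)).card := by
    rw [matchCount, Nat.card_eq_fintype_card, Fintype.card_subtype]
  rw [hcount]
  rw [Finset.sum_congr rfl
    (fun M hM => by rw [(Finset.mem_filter.mp hM).2.2] :
      ∀ M ∈ Finset.univ.filter
        (fun M : Finset G.E => G.IsMatching M ∧ M.card = i),
        t M.card = t i)]
  rw [Finset.sum_const, nsmul_eq_mul]

end Multigraph

open MvPolynomial Multigraph in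
/-- For a loop-free multigraph `G` with `n` vertices and `aᵢ`
`i`-matchings, `Σᵢ aᵢ x^{n−2i} yⁱ = ξ(G, x, 0, y)`; in particular
`g(G,x) = ξ(G,1,0,x)` and `μ(G,x) = ξ(G,x,0,−1)`. -/
theorem matching_eq_xi (G : Multigraph) (hG : ∀ e : G.E, ¬ (G.ends e).IsDiag) :
    (∑ i ∈ Finset.range (Fintype.card G.V + 1),
        (G.matchCount i : MvPolynomial (Fin 2) ℤ)
          * (X 0) ^ (Fintype.card G.V - 2 * i) * (X 1) ^ i =
      G.xi (X 0 : MvPolynomial (Fin 2) ℤ) 0 (X 1))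
    ∧ (∑ i ∈ Finset.range (Fintype.card G.V + 1),
        (G.matchCount i : Polynomial ℤ) * Polynomial.X ^ i =
      G.xi (1 : Polynomial ℤ) 0 Polynomial.X)
    ∧ (∑ i ∈ Finset.range (Fintype.card G.V + 1),
        (-1 : Polynomial ℤ) ^ i * (G.matchCount i : Polynomial ℤ)
          * Polynomial.X ^ (Fintype.card G.V - 2 * i) =
      G.xi (Polynomial.X : Polynomial ℤ) 0 (-1)) := by
  refine ⟨?_, ?_, ?_⟩
  · rw [xi_y_zero G hG (X 0 : MvPolynomial (Fin 2) ℤ) (X 1),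
      sum_matching G hG (fun i => (X 0 : MvPolynomial (Fin 2) ℤ)
        ^ (Fintype.card G.V - 2 * i) * (X 1) ^ i)]
    exact Finset.sum_congr rfl fun i _ => by ring
  · rw [xi_y_zero G hG (1 : Polynomial ℤ) Polynomial.X,
      sum_matching G hG (fun i => (1 : Polynomial ℤ)
        ^ (Fintype.card G.V - 2 * i) * Polynomial.X ^ i)]
    exact Finset.sum_congr rfl fun i _ => by rw [one_pow, one_mul]
  · rw [xi_y_zero G hG (Polynomial.X : Polynomial ℤ) (-1),
      sum_matching G hG (fun i => (Polynomial.X : Polynomial ℤ)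
        ^ (Fintype.card G.V - 2 * i) * (-1) ^ i)]
    exact Finset.sum_congr rfl fun i _ => by ring
end

section
/- Let G = (V, E, c) be a finite edge-labeled multigraph with labels in Λ, and work in the field ℚ(x, y, (x_λ)_{λ∈Λ}, (y_λ)_{λ∈Λ}) of rational functions. Then Zaslavsky's normal function R(G, c) = Σ_{S ⊆ E} (Π_{e ∈ S} x_{c(e)}) (Π_{e ∉ S} y_{c(e)}) (x−1)^{r(E)−r(S)} (y−1)^{|S|−r(S)}, where r(S) = |V| − k(S), satisfies (x−1)^{k(E)} · (y−1)^{|V|} · R(G, c) = (Π_{e ∈ E} y_{c(e)}) · ξ_lab(G, (x−1)(y−1), y−1, 0, t̄), where t_λ = x_λ / y_λ for each λ ∈ Λ. -/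
/-- The labeled edge elimination polynomial for a labeling `c : E → Λ`, evaluated at
`x y z` and weights `t : Λ → R`:
`ξ_lab = Σ_{(A ⊔ B) ⊆ E} (Π_{e ∈ A∪B} t_{c(e)}) x^{k(A∪B)-k_cov(B)} y^{|A|+|B|-k_cov(B)} z^{k_cov(B)}`. -/
noncomputable def Multigraph.xiLab {R : Type*} [CommRing R] (G : Multigraph)
    {Λ : Type*} (c : G.E → Λ) (x y z : R) (t : Λ → R) : R :=
  ∑ A : Finset G.E, ∑ B : Finset G.E,
    if G.CovDisjoint A B then
      (∏ e ∈ A ∪ B, t (c e)) *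
        (x ^ (G.k (A ∪ B) - G.kcov B) * y ^ (A.card + B.card - G.kcov B) * z ^ G.kcov B)
    else 0

open MvPolynomial

variable (Λ : Type)

/-- The field `ℚ(x, y, (x_λ)_{λ∈Λ}, (y_λ)_{λ∈Λ})` of rational functions. -/
noncomputable abbrev ZasField : Type := FractionRing (MvPolynomial (Fin 2 ⊕ Λ ⊕ Λ) ℚ)

/-- The rational function `x`. -/
noncomputable def zasX : ZasField Λ :=
  algebraMap (MvPolynomial (Fin 2 ⊕ Λ ⊕ Λ) ℚ) _ (X (Sum.inl 0))

/-- The rational function `y`. -/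
noncomputable def zasY : ZasField Λ :=
  algebraMap (MvPolynomial (Fin 2 ⊕ Λ ⊕ Λ) ℚ) _ (X (Sum.inl 1))

/-- The rational function `x_λ`. -/
noncomputable def zasXl (l : Λ) : ZasField Λ :=
  algebraMap (MvPolynomial (Fin 2 ⊕ Λ ⊕ Λ) ℚ) _ (X (Sum.inr (Sum.inl l)))

/-- The rational function `y_λ`. -/
noncomputable def zasYl (l : Λ) : ZasField Λ :=
  algebraMap (MvPolynomial (Fin 2 ⊕ Λ ⊕ Λ) ℚ) _ (X (Sum.inr (Sum.inr l)))

/-- The rank `r(S) = |V| − k(S)` (as an integer). -/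
noncomputable def Multigraph.rk (G : Multigraph) (S : Finset G.E) : ℤ :=
  (Fintype.card G.V : ℤ) - (G.k S : ℤ)

/-- Zaslavsky's normal function of the edge-labeled graph:
`R(G,c) = Σ_{S⊆E} (Π_{e∈S} x_{c(e)}) (Π_{e∉S} y_{c(e)}) (x−1)^{r(E)−r(S)} (y−1)^{|S|−r(S)}`. -/
noncomputable def Multigraph.zaslavsky (G : Multigraph) (c : G.E → Λ) : ZasField Λ :=
  ∑ S : Finset G.E,
    (∏ e ∈ S, zasXl Λ (c e)) * (∏ e ∈ Sᶜ, zasYl Λ (c e))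
      * (zasX Λ - 1) ^ (G.rk Finset.univ - G.rk S)
      * (zasY Λ - 1) ^ ((S.card : ℤ) - G.rk S)

section Aux

variable {Λ}

lemma zas_algebraMap_ne_zero (p : MvPolynomial (Fin 2 ⊕ Λ ⊕ Λ) ℚ) (hp : p ≠ 0) :
    algebraMap (MvPolynomial (Fin 2 ⊕ Λ ⊕ Λ) ℚ) (ZasField Λ) p ≠ 0 := by
  rw [ne_eq, IsFractionRing.to_map_eq_zero_iff]
  exact hp

lemma zasX_sub_one_ne_zero : zasX Λ - 1 ≠ 0 := by
  have : zasX Λ - 1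
      = algebraMap (MvPolynomial (Fin 2 ⊕ Λ ⊕ Λ) ℚ) (ZasField Λ) (X (Sum.inl 0) - 1) := by
    simp [zasX, map_sub]
  rw [this]
  apply zas_algebraMap_ne_zero
  intro h
  simpa using congrArg (MvPolynomial.eval (fun _ => (0 : ℚ))) h

lemma zasY_sub_one_ne_zero : zasY Λ - 1 ≠ 0 := by
  have : zasY Λ - 1
      = algebraMap (MvPolynomial (Fin 2 ⊕ Λ ⊕ Λ) ℚ) (ZasField Λ) (X (Sum.inl 1) - 1) := by
    simp [zasY, map_sub]
  rw [this]
  apply zas_algebraMap_ne_zero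
  intro h
  simpa using congrArg (MvPolynomial.eval (fun _ => (0 : ℚ))) h

lemma zasYl_ne_zero (l : Λ) : zasYl Λ l ≠ 0 :=
  zas_algebraMap_ne_zero _ (MvPolynomial.X_ne_zero _)

lemma Multigraph.kcov_empty (G : Multigraph) : G.kcov ∅ = 0 := by
  have h : IsEmpty {w : G.V // ∃ e ∈ (∅ : Finset G.E), w ∈ G.ends e} := by
    constructor
    rintro ⟨w, e, he, -⟩
    simp at he
  haveI : IsEmpty (Quot (fun u v : {w : G.V // ∃ e ∈ (∅ : Finset G.E), w ∈ G.ends e} =>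
      ∃ e ∈ (∅ : Finset G.E), G.ends e = s(u.val, v.val))) :=
    (Quot.mk_surjective).isEmpty
  simp [Multigraph.kcov, Nat.card_of_isEmpty]

lemma Multigraph.kcov_pos (G : Multigraph) {B : Finset G.E} (hB : B.Nonempty) :
    0 < G.kcov B := by
  obtain ⟨e, he⟩ := hB
  obtain ⟨⟨a, b⟩, hab⟩ := Quot.exists_rep (G.ends e)
  have ha : a ∈ G.ends e := by rw [← hab]; exact Sym2.mem_mk_left a b
  haveI : Nonempty {w : G.V // ∃ e' ∈ B, w ∈ G.ends e'} := ⟨⟨a, e, he, ha⟩⟩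
  haveI : Nonempty (Quot (fun u v : {w : G.V // ∃ e ∈ B, w ∈ G.ends e} =>
      ∃ e ∈ B, G.ends e = s(u.val, v.val))) := Nonempty.map (Quot.mk _) ‹_›
  exact Nat.card_pos

lemma zas_per_term {K : Type*} [Field K] (a b PX PY PC PD : K)
    (hPD : PY * PD = PX) (kU V kS n : ℕ) (ha : a ≠ 0) (hb : b ≠ 0) :
    a ^ kU * b ^ V * (PX * PC * (a ^ kS * (a ^ kU)⁻¹) * (b ^ n * b ^ kS * (b ^ V)⁻¹))
      = PY * PC * (PD * ((a * b) ^ kS * b ^ n)) := by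
  rw [← hPD, mul_pow]
  field_simp

end Aux

open Multigraph in
/-- In `ℚ(x, y, (x_λ), (y_λ))`:
`(x−1)^{k(E)} (y−1)^{|V|} R(G,c) = (Π_{e∈E} y_{c(e)}) · ξ_lab(G, (x−1)(y−1), y−1, 0, t̄)`
with `t_λ = x_λ / y_λ`. -/
theorem zaslavsky_eq_xiLab (G : Multigraph) (c : G.E → Λ) :
    (zasX Λ - 1) ^ (G.k Finset.univ) * (zasY Λ - 1) ^ (Fintype.card G.V)
        * G.zaslavsky Λ c =
      (∏ e : G.E, zasYl Λ (c e)) *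
        G.xiLab c ((zasX Λ - 1) * (zasY Λ - 1)) (zasY Λ - 1) 0
          (fun l => zasXl Λ l / zasYl Λ l) := by
  classical
  have hA : zasX Λ - 1 ≠ 0 := zasX_sub_one_ne_zero
  have hB : zasY Λ - 1 ≠ 0 := zasY_sub_one_ne_zero
  unfold Multigraph.zaslavsky Multigraph.xiLab Multigraph.rk
  rw [Finset.mul_sum, Finset.mul_sum]
  apply Finset.sum_congr rfl
  intro S _
  -- reduce inner sum over B to the single term B = ∅
  rw [Finset.sum_eq_single (∅ : Finset G.E)]
  · have hdisj : G.CovDisjoint S ∅ := by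
      rintro v - ⟨e, he, -⟩
      simp at he
    rw [if_pos hdisj]
    simp only [Finset.union_empty, Finset.card_empty, add_zero, G.kcov_empty,
      Nat.sub_zero, pow_zero, mul_one]
    -- split ∏ over univ into S and Sᶜ
    rw [← Finset.prod_mul_prod_compl S (fun e => zasYl Λ (c e))]
    have hprod : (∏ e ∈ S, zasYl Λ (c e)) * (∏ e ∈ S, zasXl Λ (c e) / zasYl Λ (c e))
        = ∏ e ∈ S, zasXl Λ (c e) := by
      rw [← Finset.prod_mul_distrib]
      exact Finset.prod_congr rfl fun e _ => by
        rw [mul_comm, div_mul_cancel₀ _ (zasYl_ne_zero (c e))]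
    have h1 : (zasX Λ - 1) ^
        (((Fintype.card G.V : ℤ) - (G.k Finset.univ : ℤ)) -
          ((Fintype.card G.V : ℤ) - (G.k S : ℤ)))
        = (zasX Λ - 1) ^ (G.k S) * ((zasX Λ - 1) ^ (G.k Finset.univ))⁻¹ := by
      rw [show (((Fintype.card G.V : ℤ) - (G.k Finset.univ : ℤ)) -
          ((Fintype.card G.V : ℤ) - (G.k S : ℤ))) = (G.k S : ℤ) - (G.k Finset.univ : ℤ) by
        ring]
      rw [zpow_sub₀ hA, zpow_natCast, zpow_natCast, div_eq_mul_inv]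
    have h2 : (zasY Λ - 1) ^
        ((S.card : ℤ) - ((Fintype.card G.V : ℤ) - (G.k S : ℤ)))
        = (zasY Λ - 1) ^ S.card * (zasY Λ - 1) ^ (G.k S) *
            ((zasY Λ - 1) ^ (Fintype.card G.V))⁻¹ := by
      rw [show ((S.card : ℤ) - ((Fintype.card G.V : ℤ) - (G.k S : ℤ)))
          = ((S.card + G.k S : ℕ) : ℤ) - (Fintype.card G.V : ℤ) by push_cast; ring]
      rw [zpow_sub₀ hB, zpow_natCast, zpow_natCast, pow_add, div_eq_mul_inv]
    rw [h1, h2]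
    exact zas_per_term _ _ _ _ _ _ hprod _ _ _ _ hA hB
  · intro B _ hBne
    have hk : G.kcov B ≠ 0 := (G.kcov_pos (Finset.nonempty_iff_ne_empty.mpr hBne)).ne'
    simp [zero_pow hk]
  · intro h
    simp at h
end

section
/- Let G = (V, E, c) be a finite loop-free edge-labeled multigraph with labels in Λ. Then ξ_lab(G, 1, 0, 1, t̄) = Σ_{M ⊆ E, M a matching} Π_{e ∈ M} t_{c(e)}, the sum over all matchings of G (sets of edges, no two sharing an endpoint, including the empty matching). In particular, taking each edge as its own label and substituting t_e = y_e·x_u·x_v for every edge e with endpoints u and v, one obtains the Heilmann–Lieb multivariate matching polynomial: ξ_lab(G, 1, 0, 1, t̄) = Σ_{M ⊆ E, M a matching} Π_{e = {u,v} ∈ M} y_e·x_u·x_v. -/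
instance (G : Multigraph) (M : Finset G.E) : Decidable (G.IsMatching M) := by
  unfold Multigraph.IsMatching; infer_instance

namespace Multigraph

variable (G : Multigraph) (B : Finset G.E)

abbrev covT := {w : G.V // ∃ e ∈ B, w ∈ G.ends e}

def relB : covT G B → covT G B → Prop :=
  fun u v => ∃ e ∈ B, G.ends e = s(u.val, v.val)

lemma kcov_def' : G.kcov B = Nat.card (Quot (relB G B)) := rfl

noncomputable def pickMem {α : Type} (z : Sym2 α) : {x // x ∈ z} :=
  Classical.choice (by
    induction z using Sym2.inductionOn with
    | hf a b => exact ⟨⟨a, Sym2.mem_mk_left a b⟩⟩)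

lemma ends_exists (z : Sym2 G.V) : ∃ a b, z = s(a, b) :=
  z.inductionOn fun a b => ⟨a, b, rfl⟩

lemma cls {e : G.E} (he : e ∈ B) (u v : covT G B)
    (hu : u.val ∈ G.ends e) (hv : v.val ∈ G.ends e) :
    Quot.mk (relB G B) u = Quot.mk (relB G B) v := by
  obtain ⟨a, b, hab⟩ := ends_exists G (G.ends e)
  rw [hab, Sym2.mem_iff] at hu hv
  by_cases huv : u.val = v.val
  · exact congrArg _ (Subtype.ext huv)
  · apply Quot.sound
    refine ⟨e, he, ?_⟩
    rw [hab]
    rcases hu with hu | hu <;> rcases hv with hv | hv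
    · exact absurd (hu.trans hv.symm) huv
    · rw [hu, hv]
    · rw [hu, hv]; exact Sym2.eq_swap
    · exact absurd (hu.trans hv.symm) huv

noncomputable def sFun : {e // e ∈ B} → Quot (relB G B) :=
  fun e => Quot.mk _ ⟨(pickMem (G.ends e.val)).val, ⟨e.val, e.prop, (pickMem (G.ends e.val)).prop⟩⟩

lemma sFun_surj : Function.Surjective (sFun G B) := by
  intro q
  induction q using Quot.ind with
  | _ v =>
    obtain ⟨e, he, hve⟩ := v.prop
    exact ⟨⟨e, he⟩, cls G B he _ v (pickMem (G.ends e)).prop hve⟩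

lemma kcov_le : G.kcov B ≤ B.card := by
  rw [kcov_def']
  calc Nat.card (Quot (relB G B)) ≤ Nat.card {e // e ∈ B} :=
        Nat.card_le_card_of_surjective _ (sFun_surj G B)
    _ = B.card := by simp [Nat.card_eq_fintype_card, Fintype.card_coe]

noncomputable def gq (hB : G.IsMatching B) : Quot (relB G B) → {e // e ∈ B} :=
  Quot.lift (fun v => ⟨Classical.choose v.prop, (Classical.choose_spec v.prop).1⟩) (by
    rintro u v ⟨e, he, hends⟩
    have hu : u.val ∈ G.ends e := by rw [hends]; exact Sym2.mem_mk_left _ _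
    have hv : v.val ∈ G.ends e := by rw [hends]; exact Sym2.mem_mk_right _ _
    have h₁ : Classical.choose u.prop = e := by
      by_contra hne
      exact hB _ (Classical.choose_spec u.prop).1 e he hne u.val
        (Classical.choose_spec u.prop).2 hu
    have h₂ : Classical.choose v.prop = e := by
      by_contra hne
      exact hB _ (Classical.choose_spec v.prop).1 e he hne v.val
        (Classical.choose_spec v.prop).2 hv
    simp [h₁, h₂])

lemma gq_mk (hB : G.IsMatching B) (v : covT G B) (e : G.E) (he : e ∈ B)
    (hve : v.val ∈ G.ends e) : (gq G B hB (Quot.mk _ v)).val = e := by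
  show Classical.choose v.prop = e
  by_contra hne
  exact hB _ (Classical.choose_spec v.prop).1 e he hne v.val
    (Classical.choose_spec v.prop).2 hve

lemma kcov_eq_of_matching (hB : G.IsMatching B) : G.kcov B = B.card := by
  classical
  have hinj : Function.Injective (sFun G B) := by
    have hgs : ∀ e : {e // e ∈ B}, gq G B hB (sFun G B e) = e := by
      intro e
      exact Subtype.ext (gq_mk G B hB _ e.val e.prop (pickMem (G.ends e.val)).prop)
    intro e₁ e₂ h
    rw [← hgs e₁, ← hgs e₂, h]
  have : Nat.card {e // e ∈ B} = Nat.card (Quot (relB G B)) :=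
    Nat.card_eq_of_bijective _ ⟨hinj, sFun_surj G B⟩
  rw [kcov_def', ← this]
  simp [Nat.card_eq_fintype_card, Fintype.card_coe]

lemma kcov_lt_of_not_matching (hB : ¬ G.IsMatching B) : G.kcov B < B.card := by
  rcases lt_or_eq_of_le (kcov_le G B) with h | h
  · exact h
  exfalso
  apply hB
  intro e₁ h₁ e₂ h₂ hne v hv₁ hv₂
  have hinj : Function.Injective (sFun G B) := by
    have : Nat.card {e // e ∈ B} = Nat.card (Quot (relB G B)) := by
      rw [← kcov_def', h]; simp [Nat.card_eq_fintype_card, Fintype.card_coe]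
    exact ((Nat.bijective_iff_surjective_and_card (sFun G B)).2
      ⟨sFun_surj G B, this⟩).injective
  have hvB : ∃ e ∈ B, v ∈ G.ends e := ⟨e₁, h₁, hv₁⟩
  have h1 : sFun G B ⟨e₁, h₁⟩ = Quot.mk _ (⟨v, hvB⟩ : covT G B) :=
    cls G B h₁ _ _ (pickMem (G.ends e₁)).prop hv₁
  have h2 : sFun G B ⟨e₂, h₂⟩ = Quot.mk _ (⟨v, hvB⟩ : covT G B) :=
    cls G B h₂ _ _ (pickMem (G.ends e₂)).prop hv₂
  have := hinj (h1.trans h2.symm)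
  exact hne (congrArg Subtype.val this)


lemma xiLab_eq_matchingSum {R : Type*} [CommRing R] (G : Multigraph) {Λ : Type*}
    (c : G.E → Λ) (t : Λ → R) :
    G.xiLab c 1 0 1 t = ∑ M : Finset G.E, if G.IsMatching M then ∏ e ∈ M, t (c e) else 0 := by
  classical
  unfold xiLab
  rw [Finset.sum_comm]
  apply Finset.sum_congr rfl
  intro B _
  rw [Finset.sum_eq_single (∅ : Finset G.E)]
  · have hcd : G.CovDisjoint ∅ B := by rintro v ⟨e, he, -⟩; simp at he
    rw [if_pos hcd]
    simp only [Finset.empty_union, Finset.card_empty, zero_add, one_pow, one_mul, mul_one]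
    by_cases hM : G.IsMatching B
    · rw [if_pos hM, kcov_eq_of_matching G B hM, Nat.sub_self, pow_zero, mul_one]
    · rw [if_neg hM, zero_pow, mul_zero]
      have := kcov_lt_of_not_matching G B hM
      omega
  · intro A _ hA
    by_cases hcd : G.CovDisjoint A B
    · rw [if_pos hcd]
      have hApos : 0 < A.card := Finset.card_pos.mpr (Finset.nonempty_iff_ne_empty.mpr hA)
      have := kcov_le G B
      rw [zero_pow (by omega)]
      ring
    · rw [if_neg hcd]
  · intro h
    exact absurd (Finset.mem_univ _) h

end Multigraph

open MvPolynomial Multigraph in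
/-- For loop-free `G`, `ξ_lab(G,1,0,1,t̄)` is the sum over all
matchings `M` of `Π_{e∈M} t_{c(e)}`; in particular, labeling each edge by itself and
substituting `t_e = y_e·x_u·x_v` (for `e = {u,v}`) yields the Heilmann–Lieb
multivariate matching polynomial. -/
theorem xiLab_matching (Λ : Type) (G : Multigraph) (c : G.E → Λ)
    (hG : ∀ e : G.E, ¬ (G.ends e).IsDiag) :
    (G.xiLab c (1 : MvPolynomial Λ ℤ) 0 1 (fun l => X l) =
      ∑ M : Finset G.E, if G.IsMatching M then ∏ e ∈ M, X (c e) else 0)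
    ∧ (∀ (R : Type) [CommRing R], ∀ (yw : G.E → R) (xw : G.V → R),
        G.xiLab (fun e => e) (1 : R) 0 1
            (fun e => yw e *
              Sym2.lift ⟨fun a b => xw a * xw b, fun a b => mul_comm _ _⟩ (G.ends e)) =
          ∑ M : Finset G.E, if G.IsMatching M then
            ∏ e ∈ M, yw e *
              Sym2.lift ⟨fun a b => xw a * xw b, fun a b => mul_comm _ _⟩ (G.ends e)
          else 0) := by
  constructor
  · exact Multigraph.xiLab_eq_matchingSum G c (fun l => MvPolynomial.X l)
  · intro R _ yw xw
    exact Multigraph.xiLab_eq_matchingSum G (fun e => e)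
      (fun e => yw e * Sym2.lift ⟨fun a b => xw a * xw b, fun a b => mul_comm _ _⟩ (G.ends e))
end
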